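/- arXiv:1512.02179 — 4 statements merged into one kernel-verified Lean document; each statement's English description precedes it below -/
import Mathlib

section
/- Let T be a rooted finite tree with q leaves and let γ be an integer with 2 ≤ γ ≤ q. Then the γ-height of the root of T is at most log_γ(q), i.e., γ^(height_γ(T)) ≤ q. -/
/-- A finite rooted tree: a node together with a (possibly empty) list of subtrees. -/
inductive RTree : Type where
  | node : List RTree → RTree

namespace RTree

/-- Number of leaves of a rooted tree (a node with no children is a leaf). -/
def numLeaves : RTree → ℕ
  | node [] => 1
  | node (t :: ts) => ((t :: ts).attach.map (fun x => numLeaves x.1)).sum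
termination_by t => sizeOf t
decreasing_by
  have h := List.sizeOf_lt_of_mem x.2
  simp only [RTree.node.sizeOf_spec, List.cons.sizeOf_spec] at h ⊢
  omega

/-- The γ-height of a rooted tree: leaves have γ-height 0; for an internal node
whose children's γ-heights have maximum `g`, the γ-height is `g+1` if at least γ
children have γ-height exactly `g`, and `g` otherwise. -/
def gheight (γ : ℕ) : RTree → ℕ
  | node [] => 0
  | node (t :: ts) =>
    let hs := ((t :: ts).attach.map (fun x => gheight γ x.1))
    let g := hs.foldr max 0
    if γ ≤ (hs.filter (fun h => h = g)).length then g + 1 else g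
termination_by t => sizeOf t
decreasing_by
  have h := List.sizeOf_lt_of_mem x.2
  simp only [RTree.node.sizeOf_spec, List.cons.sizeOf_spec] at h ⊢
  omega

end RTree

/-! A node of γ-height `g + 1` has at least γ children of γ-height `g`, each with at least `γ ^ g`
leaves by induction; a node of γ-height `g` has a child of γ-height `g`, which alone has at least
`γ ^ g` leaves. -/

theorem List.foldr_max_zero_mem {l : List ℕ} (hl : l ≠ []) : l.foldr max 0 ∈ l :=
  List.maximum_mem (List.foldr_max_of_ne_nil hl).symm

theorem List.length_filter_mul_le_sum_map {α : Type*} (l : List α) (p : α → Bool) (f : α → ℕ)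
    {B : ℕ} (hB : ∀ x ∈ l, p x → B ≤ f x) : (l.filter p).length * B ≤ (l.map f).sum :=
  calc (l.filter p).length * B = ((l.filter p).map fun _ => B).sum := by simp
    _ ≤ ((l.filter p).map f).sum :=
      List.sum_le_sum fun x hx => hB x (List.mem_of_mem_filter hx) (List.mem_filter.mp hx).2
    _ ≤ (l.map f).sum := ((l.filter_sublist).map f).sum_le_sum fun _ _ => Nat.zero_le _

namespace RTree

theorem induction {P : RTree → Prop} (node : ∀ ts, (∀ t ∈ ts, P t) → P (node ts)) :
    ∀ t, P t
  | .node ts => node ts fun t _ => induction node t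
termination_by t => sizeOf t
decreasing_by
  have h := List.sizeOf_lt_of_mem ‹t ∈ ts›
  simp only [RTree.node.sizeOf_spec] at h ⊢
  omega

theorem numLeaves_node_cons (t : RTree) (ts : List RTree) :
    numLeaves (node (t :: ts)) = ((t :: ts).map numLeaves).sum := by
  rw [numLeaves, List.attach_map_val]

theorem gheight_node_cons (γ : ℕ) (t : RTree) (ts : List RTree) :
    gheight γ (node (t :: ts)) =
      let hs := (t :: ts).map (gheight γ)
      let g := hs.foldr max 0
      if γ ≤ (hs.filter (fun h => h = g)).length then g + 1 else g := by
  rw [gheight, List.attach_map_val]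

theorem pow_gheight_le_numLeaves (γ : ℕ) (t : RTree) : γ ^ gheight γ t ≤ numLeaves t := by
  induction t using RTree.induction with
  | node ts ih =>
  rcases ts with _ | ⟨t, ts⟩
  · simp [gheight, numLeaves]
  rw [gheight_node_cons, numLeaves_node_cons]
  dsimp only
  set g := ((t :: ts).map (gheight γ)).foldr max 0
  have child_le : ∀ x ∈ t :: ts, gheight γ x = g → γ ^ g ≤ numLeaves x :=
    fun x hx hxg => hxg ▸ ih x hx
  split_ifs with hcount
  · calc γ ^ (g + 1) = γ * γ ^ g := pow_succ' γ g
      _ ≤ (((t :: ts).map (gheight γ)).filter (fun h => h = g)).length * γ ^ g :=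
        Nat.mul_le_mul_right _ hcount
      _ = ((t :: ts).filter (fun x => gheight γ x = g)).length * γ ^ g := by
        rw [List.filter_map, List.length_map]; rfl
      _ ≤ ((t :: ts).map numLeaves).sum :=
        List.length_filter_mul_le_sum_map _ _ _ fun x hx hxg => child_le x hx (by simpa using hxg)
  · obtain ⟨x, hx, hxg⟩ := List.mem_map.mp
      (List.foldr_max_zero_mem (l := (t :: ts).map (gheight γ)) (by simp))
    calc γ ^ g ≤ numLeaves x := child_le x hx hxg
      _ ≤ ((t :: ts).map numLeaves).sum := List.le_sum_of_mem (List.mem_map_of_mem hx)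

end RTree

theorem gamma_height_le_log_general (γ : ℕ) (t : RTree) :
    γ ^ RTree.gheight γ t ≤ RTree.numLeaves t :=
  RTree.pow_gheight_le_numLeaves γ t

/-- If the tree `t` has `q` leaves and `2 ≤ γ ≤ q`, then the γ-height of (the root of) `t`
is at most `log_γ q`, i.e. `γ ^ height_γ(t) ≤ q`. -/
theorem gamma_height_le_log (γ : ℕ) (t : RTree) (hγ2 : 2 ≤ γ)
    (hγq : γ ≤ RTree.numLeaves t) :
    γ ^ RTree.gheight γ t ≤ RTree.numLeaves t :=
  gamma_height_le_log_general γ t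
end

section
/- For every n ≥ 2 and every k with 1 ≤ k ≤ n, there exists a family S̄ = (S_1, ..., S_m) of subsets of {0,1,...,n-1} with m ≤ C·k²·log n (for some absolute constant C) such that for every subset A ⊆ {0,...,n-1} with |A| ≤ k and every a ∈ A, there exists an index i with S_i ∩ A = {a}. -/
/-!
Colour `{0, …, n-1}` with `2k` colours and take as selecting set the points of colour `0`. For
`|A| = k` and `a ∈ A`, a uniformly random colouring isolates `a` in `A` (colour `0` at `a`, a nonzero
colour on `A \ {a}`) with probability `(2k)⁻¹ (1 - (2k)⁻¹)^(k-1) ≥ (4k)⁻¹` by Bernoulli's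
inequality. For `m` independent colourings, a fixed pair `(a, A)` is missed by all of them with
probability `(1 - (4k)⁻¹)^m`, and there are at most `n^(k+1)` pairs, so the union bound leaves some
choice of colourings when `m > 4k(k+1) log n`; `m ≈ 8 k² log n` suffices. Sets of size `< k`
are covered by extending them to size `k`. Probabilities are replaced by counting `m`-tuples.
-/

open Finset Real

theorem exists_forall_exists_mem_of_card_mul_one_sub_pow_lt {α ι : Type*} [Fintype α]
    [Nonempty α] (s : Finset ι) (G : ι → Finset α) {p : ℝ}
    (hG : ∀ i ∈ s, p * Fintype.card α ≤ #(G i)) {m : ℕ} (hm : #s * (1 - p) ^ m < 1) :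
    ∃ F : Fin m → α, ∀ i ∈ s, ∃ j, F j ∈ G i := by
  classical
  by_contra! hF
  set q : ℝ := (Fintype.card α : ℝ)
  have hcover : (univ : Finset (Fin m → α)) ⊆
      s.biUnion fun i => Fintype.piFinset fun _ => (G i)ᶜ := fun F _ => by
    obtain ⟨i, hi, hFi⟩ := hF F
    exact mem_biUnion.2 ⟨i, hi, Fintype.mem_piFinset.2 fun j => mem_compl.2 (hFi j)⟩
  have hmiss : ∀ i ∈ s, ((#(G i)ᶜ : ℕ) : ℝ) ^ m ≤ ((1 - p) * q) ^ m := fun i hi => by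
    rw [card_compl, Nat.cast_sub (card_le_univ _)]
    exact pow_le_pow_left₀ (sub_nonneg.2 (mod_cast card_le_univ _)) (by linarith [hG i hi]) m
  have hq : 0 < q ^ m := pow_pos (by simp [q, Fintype.card_pos]) m
  have := calc q ^ m = #(univ : Finset (Fin m → α)) := by simp [q]
    _ ≤ ∑ i ∈ s, ((#(G i)ᶜ : ℕ) : ℝ) ^ m := by
      exact_mod_cast (card_le_card hcover).trans (card_biUnion_le.trans_eq (by simp))
    _ ≤ ∑ i ∈ s, ((1 - p) * q) ^ m := sum_le_sum hmiss
    _ = #s * (1 - p) ^ m * q ^ m := by rw [sum_const, nsmul_eq_mul, mul_pow, mul_assoc]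
  nlinarith

theorem mul_one_sub_pow_lt_one {N p : ℝ} {m : ℕ} (hN : 0 < N) (hp : p ≤ 1)
    (hm : log N < p * m) : N * (1 - p) ^ m < 1 := by
  have hpow : (1 - p) ^ m ≤ exp (-(p * m)) := by
    rw [show -(p * m) = m * -p by ring, exp_nat_mul]
    exact pow_le_pow_left₀ (sub_nonneg.2 hp) (by linarith [add_one_le_exp (-p)]) m
  calc N * (1 - p) ^ m ≤ exp (log N) * exp (-(p * m)) := by
        rw [exp_log hN]; exact mul_le_mul_of_nonneg_left hpow hN.le
    _ = exp (log N - p * m) := by rw [← exp_add, sub_eq_add_neg]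
    _ < 1 := exp_lt_one_iff.2 (sub_neg.2 hm)

theorem exists_le_mul_sq_log_and_pow_mul_one_sub_pow_lt_one {n k : ℕ} (hn : 2 ≤ n) (hk : 1 ≤ k) :
    ∃ m : ℕ, (m : ℝ) ≤ 10 * k ^ 2 * log n ∧
      (n : ℝ) ^ (k + 1) * (1 - (4 * k : ℝ)⁻¹) ^ m < 1 := by
  -- `log n > 1/2` absorbs the `+ 1` of `m = ⌊8 k² log n⌋ + 1` into the constant `10`.
  have hL : 1 / 2 < log n := by
    have := log_le_log two_pos (by exact_mod_cast hn : (2 : ℝ) ≤ n)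
    linarith [log_two_gt_d9]
  have hkR : (1 : ℝ) ≤ k := by exact_mod_cast hk
  refine ⟨⌊8 * k ^ 2 * log n⌋₊ + 1, ?_, mul_one_sub_pow_lt_one (by positivity) ?_ ?_⟩
  · have := Nat.floor_le (by positivity : 0 ≤ 8 * (k : ℝ) ^ 2 * log n)
    push_cast
    nlinarith
  · exact inv_le_one_of_one_le₀ (by linarith)
  · have := Nat.lt_floor_add_one (8 * (k : ℝ) ^ 2 * log n)
    rw [log_pow, inv_mul_eq_div, lt_div_iff₀ (by positivity)]
    push_cast
    nlinarith

section Colorings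

variable {α β : Type*} [Fintype α] [DecidableEq α] [Fintype β] [DecidableEq β]

def isolatingColorings (c : β) (a : α) (T : Finset α) : Finset (α → β) :=
  {g | g a = c ∧ ∀ b ∈ T, g b ≠ c}

theorem isolatingColorings_eq_piFinset (c : β) {a : α} {T : Finset α} (ha : a ∉ T) :
    isolatingColorings c a T =
      Fintype.piFinset fun x => if x = a then {c} else if x ∈ T then {c}ᶜ else univ := by
  ext g
  simp only [isolatingColorings, mem_filter, mem_univ, true_and, Fintype.mem_piFinset]
  constructor
  · rintro ⟨hga, hgT⟩ x
    split_ifs with hxa hxT <;> simp_all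
  · intro hg
    refine ⟨by simpa using hg a, fun b hb => ?_⟩
    simpa [ne_of_mem_of_not_mem hb ha, hb] using hg b

theorem card_isolatingColorings (c : β) {a : α} {T : Finset α} (ha : a ∉ T) :
    (#(isolatingColorings c a T) : ℝ) = Fintype.card (α → β) *
      ((Fintype.card β : ℝ)⁻¹ * (1 - (Fintype.card β : ℝ)⁻¹) ^ #T) := by
  have : Nonempty β := ⟨c⟩
  rw [Fintype.card_fun, Nat.cast_pow]
  set q : ℝ := (Fintype.card β : ℝ)
  have hq : q ≠ 0 := by simp [q]
  have hfactor : ∀ x, ((#(if x = a then {c} else if x ∈ T then {c}ᶜ else univ) : ℕ) : ℝ) =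
      q * ((if x = a then q⁻¹ else 1) * (if x ∈ T then 1 - q⁻¹ else 1)) := fun x => by
    by_cases hxa : x = a
    · simp [hxa, ha, hq]
    · by_cases hxT : x ∈ T
      · simp [hxa, hxT, card_compl, q, Nat.cast_sub (Fintype.card_pos (α := β)), mul_sub, hq]
      · simp [hxa, hxT, q]
  rw [isolatingColorings_eq_piFinset c ha, Fintype.card_piFinset, Nat.cast_prod,
    prod_congr rfl fun x _ => hfactor x, prod_mul_distrib, prod_const, card_univ,
    prod_mul_distrib, prod_ite_eq', prod_ite_mem, univ_inter, prod_const]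
  simp

theorem inv_two_mul_card_le_card_isolatingColorings (c : β) {a : α} {T : Finset α} (ha : a ∉ T)
    (hT : 2 * #T ≤ Fintype.card β) :
    (2 * Fintype.card β : ℝ)⁻¹ * Fintype.card (α → β) ≤ #(isolatingColorings c a T) := by
  have hq1 : (1 : ℝ) ≤ Fintype.card β := by
    have : Nonempty β := ⟨c⟩
    exact_mod_cast Fintype.card_pos
  have hT' : (2 * #T : ℝ) ≤ Fintype.card β := by exact_mod_cast hT
  rw [card_isolatingColorings c ha]
  set q : ℝ := (Fintype.card β : ℝ)
  have hTq : #T * q⁻¹ ≤ 1 / 2 := by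
    rw [← div_eq_mul_inv, div_le_iff₀ (by linarith)]
    linarith
  have hbernoulli : 1 - #T * q⁻¹ ≤ (1 - q⁻¹) ^ #T := by
    simpa [sub_eq_add_neg] using
      one_add_mul_le_pow (by linarith [inv_le_one_of_one_le₀ hq1] : -2 ≤ -q⁻¹) #T
  calc (2 * q)⁻¹ * Fintype.card (α → β) = Fintype.card (α → β) * (q⁻¹ * (1 / 2)) := by
        rw [mul_inv]; ring
    _ ≤ Fintype.card (α → β) * (q⁻¹ * (1 - q⁻¹) ^ #T) := by
        gcongr
        linarith

theorem inv_four_mul_card_le_card_isolatingColorings_erase {k : ℕ} (c : Fin (2 * k)) (a : α)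
    {A : Finset α} (hA : #A ≤ k) :
    (4 * k : ℝ)⁻¹ * Fintype.card (α → Fin (2 * k)) ≤ #(isolatingColorings c a (A.erase a)) := by
  have hT : 2 * #(A.erase a) ≤ Fintype.card (Fin (2 * k)) := by
    have := card_erase_le (s := A) (a := a)
    rw [Fintype.card_fin]
    omega
  convert inv_two_mul_card_le_card_isolatingColorings c (notMem_erase a A) hT using 2
  rw [Fintype.card_fin]
  push_cast
  ring

theorem filter_eq_inter_eq_singleton_of_mem_isolatingColorings {c : β} {g : α → β} {a : α}
    {A A' : Finset α} (hg : g ∈ isolatingColorings c a (A'.erase a)) (ha : a ∈ A)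
    (hAA' : A ⊆ A') : ({x | g x = c} : Finset α) ∩ A = {a} := by
  rw [isolatingColorings, mem_filter] at hg
  ext x
  simp only [mem_inter, mem_filter, mem_univ, true_and, mem_singleton]
  constructor
  · rintro ⟨hgx, hxA⟩
    by_contra hxa
    exact hg.2.2 x (mem_erase.2 ⟨hxa, hAA' hxA⟩) hgx
  · rintro rfl
    exact ⟨hg.2.1, ha⟩

end Colorings

/-- For every `n ≥ 2` and `1 ≤ k ≤ n`, there exists a strong `k`-selector over `{0,…,n-1}`
of size `m ≤ C·k²·log n` for some absolute constant `C`: a family `S : Fin m → Finset (Fin n)`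
such that for every `A` with `|A| ≤ k` and every `a ∈ A`, some `S i` satisfies `S i ∩ A = {a}`. -/
theorem strong_selector_exists :
    ∃ C : ℝ, 0 < C ∧
      ∀ n k : ℕ, 2 ≤ n → 1 ≤ k → k ≤ n →
        ∃ (m : ℕ) (S : Fin m → Finset (Fin n)),
          (m : ℝ) ≤ C * (k : ℝ) ^ 2 * Real.log n ∧
          ∀ A : Finset (Fin n), A.card ≤ k → ∀ a ∈ A, ∃ i : Fin m, S i ∩ A = {a} := by
  refine ⟨10, by norm_num, fun n k hn hk hkn => ?_⟩
  have : NeZero (2 * k) := ⟨by omega⟩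
  obtain ⟨m, hmC, hm⟩ := exists_le_mul_sq_log_and_pow_mul_one_sub_pow_lt_one hn hk
  let s : Finset (Fin n × Finset (Fin n)) := univ ×ˢ powersetCard k univ
  have hs : (#s : ℝ) ≤ (n : ℝ) ^ (k + 1) := by
    exact_mod_cast (by simpa [s, pow_succ'] using Nat.mul_le_mul_left n (Nat.choose_le_pow n k))
  have hp : (0 : ℝ) ≤ 1 - (4 * k : ℝ)⁻¹ :=
    sub_nonneg.2 (inv_le_one_of_one_le₀ (by norm_cast; omega))
  obtain ⟨F, hF⟩ := exists_forall_exists_mem_of_card_mul_one_sub_pow_lt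
    (α := Fin n → Fin (2 * k)) s (fun aA => isolatingColorings 0 aA.1 (aA.2.erase aA.1))
    (fun aA haA => inv_four_mul_card_le_card_isolatingColorings_erase 0 aA.1
      (mem_powersetCard.1 (mem_product.1 haA).2).2.le)
    ((mul_le_mul_of_nonneg_right hs (pow_nonneg hp m)).trans_lt hm)
  refine ⟨m, fun j => {x | F j x = 0}, hmC, fun A hA a ha => ?_⟩
  obtain ⟨A', hAA', -, hA'⟩ := exists_subsuperset_card_eq (subset_univ A) hA (by simpa using hkn)
  obtain ⟨j, hj⟩ := hF (a, A') (by simp [s, hA'])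
  exact ⟨j, filter_eq_inter_eq_singleton_of_mem_isolatingColorings hj ha hAA'⟩
end

section
/- For every n ≥ 2 and every k with 1 ≤ k ≤ n/2, there exists a family S̄ = (S_1,...,S_m) of subsets of {0,...,n-1} with m = O(k² log n) and a threshold ξ such that: for every A ⊆ {0,...,n-1} with |A| ≤ k and a ∈ A, |{j : S_j ∩ A = {a}}| > ξ; and for every A with |A| ≥ 2k and a ∈ A, |{j : S_j ∩ A = {a}}| < ξ. -/
/-!
Take `m` independent uniform colourings of the points with `2k` colours and let `S j` be the
points of colour `0` in the `j`-th one. A colouring isolates `a` in a `t`-set `A ∋ a` with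
probability `q_t = (1 - 1/2k)^(t-1) / 2k`, and `q_k ≥ 1/4k`, `q_{2k} ≤ (2/3) q_k`.
Multiplicative Chernoff bounds (here by counting, through the exponential moment of the number
of hits) put a threshold `ξ` between `m q_{2k}` and `m q_k` that a fixed pair `(A, a)` violates
with probability below `n^-(2k+3)` once `m ≍ k² log n`; a union bound over the at most
`2 n^(2k+1)` pairs with `#A ∈ {k, 2k}` leaves a good choice. Shrinking `A` can only increase the
number of rounds isolating `a`, which covers all other sizes.
-/

open Finset Real

section Chernoff

variable {X : Type*} [Fintype X] (P : X → Prop) [DecidablePred P] {m : ℕ}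

def hitCount (ω : Fin m → X) : ℕ := #{j | P (ω j)}

lemma sum_exp_mul_hitCount (t : ℝ) :
    ∑ ω : Fin m → X, exp (t * hitCount P ω)
      = (Fintype.card X + (exp t - 1) * #{x | P x}) ^ m := by
  have hfactor : ∀ ω : Fin m → X,
      exp (t * hitCount P ω) = ∏ j, if P (ω j) then exp t else 1 := by
    intro ω
    rw [← prod_filter, prod_const, mul_comm, exp_nat_mul, hitCount]
  have hbase : (Fintype.card X : ℝ) + (exp t - 1) * #{x | P x}
      = ∑ x, if P x then exp t else 1 := by
    rw [sum_ite, sum_const, sum_const, ← card_univ,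
      ← card_filter_add_card_filter_not (s := univ) P]
    simp only [nsmul_eq_mul, Nat.cast_add, mul_one]
    ring
  simp_rw [hfactor, hbase, Fintype.sum_pow]

lemma card_le_pow_mul_exp_of_forall {q t ξ : ℝ} (hq : (#{x | P x} : ℝ) = Fintype.card X * q)
    (s : Finset (Fin m → X)) (hs : ∀ ω ∈ s, t * ξ ≤ t * hitCount P ω) :
    (#s : ℝ) ≤ Fintype.card X ^ m * exp (m * q * (exp t - 1) - t * ξ) := by
  have hmarkov : #s * exp (t * ξ) ≤ ∑ ω : Fin m → X, exp (t * hitCount P ω) :=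
    calc #s * exp (t * ξ) = ∑ ω ∈ s, exp (t * ξ) := by rw [sum_const, nsmul_eq_mul]
      _ ≤ ∑ ω ∈ s, exp (t * hitCount P ω) :=
        sum_le_sum fun ω hω => exp_le_exp.2 (hs ω hω)
      _ ≤ ∑ ω : Fin m → X, exp (t * hitCount P ω) :=
        sum_le_sum_of_subset_of_nonneg (subset_univ s) fun _ _ _ => (exp_pos _).le
  have hmgf : (Fintype.card X + (exp t - 1) * #{x | P x} : ℝ) ^ m
      ≤ Fintype.card X ^ m * exp (m * q * (exp t - 1)) := by
    have hbase_nonneg : (0 : ℝ) ≤ Fintype.card X + (exp t - 1) * #{x | P x} := by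
      have : (#{x | P x} : ℝ) ≤ Fintype.card X := by exact_mod_cast card_filter_le _ _
      nlinarith [exp_pos t]
    calc (Fintype.card X + (exp t - 1) * #{x | P x} : ℝ) ^ m
        = (Fintype.card X * (1 + q * (exp t - 1))) ^ m := by rw [hq]; ring
      _ ≤ (Fintype.card X * exp (q * (exp t - 1))) ^ m := by
        rw [hq] at hbase_nonneg
        refine pow_le_pow_left₀ (by linarith) ?_ m
        have := add_one_le_exp (q * (exp t - 1))
        gcongr
        linarith
      _ = Fintype.card X ^ m * exp (m * q * (exp t - 1)) := by
        rw [mul_pow, ← exp_nat_mul, mul_assoc]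
  rw [sum_exp_mul_hitCount] at hmarkov
  rw [sub_eq_add_neg, exp_add, exp_neg, ← mul_assoc, le_mul_inv_iff₀ (exp_pos _)]
  exact hmarkov.trans hmgf

lemma card_hitCount_le_le {q : ℝ} (hq : (#{x | P x} : ℝ) = Fintype.card X * q) (hq0 : 0 ≤ q)
    (ξ : ℝ) :
    (#{ω : Fin m → X | hitCount P ω ≤ ξ} : ℝ)
      ≤ Fintype.card X ^ m * exp (ξ / 7 - m * q / 8) := by
  refine (card_le_pow_mul_exp_of_forall P hq _ (t := -1/7) (ξ := ξ) fun ω hω => ?_).trans ?_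
  · have := (mem_filter.1 hω).2
    linarith
  · have : exp (-1/7) ≤ 7/8 := by
      have := add_one_le_exp (1/7)
      rw [div_eq_mul_inv, neg_mul, one_mul, exp_neg]
      rw [inv_le_comm₀ (exp_pos _) (by norm_num)]
      linarith
    refine mul_le_mul_of_nonneg_left (exp_le_exp.2 ?_) (by positivity)
    nlinarith [mul_le_mul_of_nonneg_left this (by positivity : (0:ℝ) ≤ m * q)]

lemma card_le_hitCount_le {q : ℝ} (hq : (#{x | P x} : ℝ) = Fintype.card X * q) (hq0 : 0 ≤ q)
    (ξ : ℝ) :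
    (#{ω : Fin m → X | ξ ≤ hitCount P ω} : ℝ)
      ≤ Fintype.card X ^ m * exp (m * q / 8 - ξ / 9) := by
  refine (card_le_pow_mul_exp_of_forall P hq _ (t := 1/9) (ξ := ξ) fun ω hω => ?_).trans ?_
  · have := (mem_filter.1 hω).2
    linarith
  · have : exp (1/9) ≤ 9/8 := by
      have := add_one_le_exp (-(1/9))
      rw [exp_neg, le_inv_comm₀ (by norm_num) (exp_pos _)] at this
      linarith
    refine mul_le_mul_of_nonneg_left (exp_le_exp.2 ?_) (by positivity)
    nlinarith [mul_le_mul_of_nonneg_left this (by positivity : (0:ℝ) ≤ m * q)]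

end Chernoff

lemma Finset.inter_eq_singleton_iff_forall_mem {α : Type*} [DecidableEq α] {s A : Finset α}
    {a : α} (ha : a ∈ A) : s ∩ A = {a} ↔ ∀ x ∈ A, (x ∈ s ↔ x = a) := by
  simp only [Finset.ext_iff, mem_inter, mem_singleton]
  exact ⟨fun h x hx => by simpa [hx] using h x,
    fun h x => ⟨fun hx => (h x hx.2).1 hx.1, fun hxa => hxa ▸ ⟨(h a ha).2 rfl, ha⟩⟩⟩

lemma card_colorings_isolating {α β : Type*} [Fintype α] [DecidableEq α] [Fintype β]
    [DecidableEq β] (b₀ : β) {A : Finset α} {a : α} (ha : a ∈ A) :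
    #{g : α → β | ({x | g x = b₀} : Finset α) ∩ A = {a}}
      = (Fintype.card β - 1) ^ (#A - 1) * Fintype.card β ^ (Fintype.card α - #A) := by
  set t : α → Finset β :=
    fun x => if x ∈ A then ({y | y = b₀ ↔ x = a} : Finset β) else univ
  have hpi : ({g : α → β | ({x | g x = b₀} : Finset α) ∩ A = {a}} : Finset (α → β))
      = Fintype.piFinset t := by
    ext g
    simp only [mem_filter, mem_univ, true_and, Fintype.mem_piFinset,
      inter_eq_singleton_iff_forall_mem ha, t]
    refine ⟨fun h x => ?_, fun h x hx => ?_⟩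
    · split_ifs with hx
      · simp [h x hx]
      · exact mem_univ _
    · simpa [hx] using h x
  have hA : ∏ x ∈ A, #(t x) = (Fintype.card β - 1) ^ (#A - 1) := by
    rw [← mul_prod_erase A _ ha, prod_congr rfl fun x hx => by
      rw [show t x = univ.erase b₀ by ext; simp [t, mem_of_mem_erase hx, ne_of_mem_erase hx]]]
    simp [t, ha, filter_eq', card_erase_of_mem ha]
  have hAc : ∏ x ∈ Aᶜ, #(t x) = Fintype.card β ^ (Fintype.card α - #A) := by
    rw [prod_congr rfl fun x hx => by rw [show t x = univ by simp [t, mem_compl.1 hx]]]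
    simp [card_compl]
  rw [hpi, Fintype.card_piFinset, ← prod_mul_prod_compl A, hA, hAc]

-- The chance that a uniform `r`-colouring gives colour `0` to a fixed point of a `t`-set and to
-- none of the other `t - 1` points.
noncomputable def isolationProb (r t : ℕ) : ℝ := (1 - (r : ℝ)⁻¹) ^ (t - 1) * (r : ℝ)⁻¹

lemma isolationProb_nonneg (r t : ℕ) : 0 ≤ isolationProb r t :=
  mul_nonneg (pow_nonneg (sub_nonneg.2 (Nat.cast_inv_le_one r)) _) (by positivity)

lemma cast_mul_isolationProb {c t N : ℕ} (hc : 1 ≤ c) (ht : 1 ≤ t) (htN : t ≤ N) :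
    (((c - 1) ^ (t - 1) * c ^ (N - t) : ℕ) : ℝ) = (c : ℝ) ^ N * isolationProb c t := by
  have hc0 : (c : ℝ) ≠ 0 := by positivity
  obtain ⟨s, rfl⟩ := Nat.exists_eq_add_of_le ht
  obtain ⟨u, rfl⟩ := Nat.exists_eq_add_of_le htN
  simp only [isolationProb, Nat.add_sub_cancel_left, Nat.cast_mul, Nat.cast_pow, Nat.cast_sub hc,
    Nat.cast_one, pow_add]
  field_simp
  rw [← mul_pow, mul_div_cancel₀ _ hc0]

lemma inv_four_mul_le_isolationProb {k : ℕ} (hk : 1 ≤ k) :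
    (4 * k : ℝ)⁻¹ ≤ isolationProb (2 * k) k := by
  have hk' : (1 : ℝ) ≤ k := by exact_mod_cast hk
  have hbernoulli :
      1 + ((k - 1 : ℕ) : ℝ) * -(2 * k : ℝ)⁻¹ ≤ (1 - (2 * k : ℝ)⁻¹) ^ (k - 1) := by
    rw [sub_eq_add_neg]
    refine one_add_mul_le_pow ?_ _
    have : (2 * k : ℝ)⁻¹ ≤ 1 := inv_le_one_of_one_le₀ (by linarith)
    linarith
  have hhalf : (1 / 2 : ℝ) ≤ 1 + ((k - 1 : ℕ) : ℝ) * -(2 * k : ℝ)⁻¹ := by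
    rw [Nat.cast_sub hk]
    field_simp
    linarith
  rw [isolationProb, Nat.cast_mul, Nat.cast_ofNat,
    show (4 * k : ℝ)⁻¹ = 1 / 2 * (2 * k : ℝ)⁻¹ by field_simp; ring]
  gcongr
  linarith

lemma isolationProb_two_mul_le {k : ℕ} (hk : 1 ≤ k) :
    isolationProb (2 * k) (2 * k) ≤ 2 / 3 * isolationProb (2 * k) k := by
  have hk' : (1 : ℝ) ≤ k := by exact_mod_cast hk
  have hsplit :
      isolationProb (2 * k) (2 * k) = isolationProb (2 * k) k * (1 - (2 * k : ℝ)⁻¹) ^ k := by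
    rw [isolationProb, isolationProb, show 2 * k - 1 = (k - 1) + k by omega, pow_add]
    push_cast
    ring
  have hdecay : (1 - (2 * k : ℝ)⁻¹) ^ k ≤ 2 / 3 := by
    have hexp : (1 - (2 * k : ℝ)⁻¹) ^ k ≤ exp (-(2 * k : ℝ)⁻¹) ^ k := by
      have : (0 : ℝ) ≤ 1 - (2 * k : ℝ)⁻¹ := by
        have : (2 * k : ℝ)⁻¹ ≤ 1 := inv_le_one_of_one_le₀ (by linarith)
        linarith
      gcongr
      linarith [add_one_le_exp (-(2 * k : ℝ)⁻¹)]
    rw [← exp_nat_mul, show (k : ℝ) * -(2 * k : ℝ)⁻¹ = -(1 / 2) by field_simp, exp_neg]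
      at hexp
    have : 3 / 2 ≤ exp (1 / 2) := by linarith [add_one_le_exp (1 / 2 : ℝ)]
    calc _ ≤ (exp (1 / 2))⁻¹ := hexp
      _ ≤ (3 / 2)⁻¹ := inv_anti₀ (by norm_num) this
      _ = 2 / 3 := by norm_num
  rw [hsplit, mul_comm (2 / 3)]
  exact mul_le_mul_of_nonneg_left hdecay (isolationProb_nonneg _ _)

lemma exists_forall_not_mem_of_card_le {Ω ι κ : Type*} [Fintype Ω] [DecidableEq Ω]
    (s : Finset ι) (t : Finset κ) (B : ι → Finset Ω) (C : κ → Finset Ω) {c : ℝ}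
    (hB : ∀ i ∈ s, (#(B i) : ℝ) ≤ c) (hC : ∀ i ∈ t, (#(C i) : ℝ) ≤ c)
    (h : (#s + #t) * c < Fintype.card Ω) :
    ∃ ω, (∀ i ∈ s, ω ∉ B i) ∧ ∀ i ∈ t, ω ∉ C i := by
  by_contra! hcover
  have hsub : (univ : Finset Ω) ⊆ s.biUnion B ∪ t.biUnion C := fun ω _ => by
    rcases em (∃ i ∈ s, ω ∈ B i) with hω | hω
    · exact mem_union_left _ (mem_biUnion.2 hω)
    · exact mem_union_right _ (mem_biUnion.2 (hcover ω fun i hi hωi => hω ⟨i, hi, hωi⟩))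
  refine h.not_ge ?_
  calc (Fintype.card Ω : ℝ) ≤ #(s.biUnion B) + #(t.biUnion C) := by
        rw [← card_univ]
        exact_mod_cast (card_le_card hsub).trans (card_union_le _ _)
    _ ≤ ∑ i ∈ s, (#(B i) : ℝ) + ∑ i ∈ t, (#(C i) : ℝ) := by
        gcongr <;> exact_mod_cast card_biUnion_le
    _ ≤ #s • c + #t • c :=
        add_le_add (sum_le_card_nsmul _ _ _ hB) (sum_le_card_nsmul _ _ _ hC)
    _ = (#s + #t) * c := by rw [nsmul_eq_mul, nsmul_eq_mul, add_mul]

section Separation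

variable {α : Type*} [Fintype α] [DecidableEq α]

lemma card_pairs_le (t : ℕ) :
    #{p : Finset α × α | #p.1 = t ∧ p.2 ∈ p.1} ≤ Fintype.card α ^ (t + 1) :=
  calc #{p : Finset α × α | #p.1 = t ∧ p.2 ∈ p.1}
        ≤ #(powersetCard t univ ×ˢ (univ : Finset α)) := card_le_card fun p hp => by simp_all
    _ ≤ Fintype.card α ^ (t + 1) := by
        rw [card_product, card_powersetCard, card_univ, pow_succ]
        exact Nat.mul_le_mul_right _ (Nat.choose_le_pow _ _)

lemma card_pairs_add_card_pairs_lt (hα : 2 ≤ Fintype.card α) {t₁ t₂ : ℕ}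
    (ht : t₁ ≤ t₂) :
    #{p : Finset α × α | #p.1 = t₁ ∧ p.2 ∈ p.1}
      + #{p : Finset α × α | #p.1 = t₂ ∧ p.2 ∈ p.1} < Fintype.card α ^ (t₂ + 3) := by
  have hmono : Fintype.card α ^ (t₁ + 1) ≤ Fintype.card α ^ (t₂ + 1) :=
    Nat.pow_le_pow_right (by omega) (by omega)
  have hsq : 4 ≤ Fintype.card α ^ 2 := by nlinarith
  have hpos : 0 < Fintype.card α ^ (t₂ + 1) := by positivity
  calc _ ≤ Fintype.card α ^ (t₁ + 1) + Fintype.card α ^ (t₂ + 1) :=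
        add_le_add (card_pairs_le t₁) (card_pairs_le t₂)
    _ < Fintype.card α ^ (t₂ + 1) * Fintype.card α ^ 2 := by nlinarith
    _ = Fintype.card α ^ (t₂ + 3) := by rw [← pow_add]

variable {r : ℕ} [NeZero r]

lemma card_colorings_isolating_eq_mul {A : Finset α} {a : α} (ha : a ∈ A) :
    (#{g : α → Fin r | ({x | g x = 0} : Finset α) ∩ A = {a}} : ℝ)
      = Fintype.card (α → Fin r) * isolationProb r #A := by
  rw [card_colorings_isolating 0 ha, Fintype.card_fun, Fintype.card_fin, Nat.cast_pow,
    cast_mul_isolationProb (Nat.one_le_iff_ne_zero.2 (NeZero.ne r)) (card_pos.2 ⟨a, ha⟩)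
      (card_le_univ A)]

theorem exists_separating_colorings {m t₁ t₂ : ℕ} {ξ : ℝ} (hα : 2 ≤ Fintype.card α)
    (ht : t₁ ≤ t₂)
    (hlow : (t₂ + 3) * log (Fintype.card α) ≤ m * isolationProb r t₁ / 8 - ξ / 7)
    (hup : (t₂ + 3) * log (Fintype.card α) ≤ ξ / 9 - m * isolationProb r t₂ / 8) :
    ∃ ω : Fin m → α → Fin r,
      (∀ A : Finset α, #A = t₁ → ∀ a ∈ A,
        ξ < #{j | ({x | ω j x = 0} : Finset α) ∩ A = {a}}) ∧
      (∀ A : Finset α, #A = t₂ → ∀ a ∈ A,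
        (#{j | ({x | ω j x = 0} : Finset α) ∩ A = {a}} : ℝ) < ξ) := by
  set N := Fintype.card α
  set T := Fintype.card (α → Fin r)
  let pairs (t : ℕ) : Finset (Finset α × α) := {p | #p.1 = t ∧ p.2 ∈ p.1}
  let isolates (p : Finset α × α) (g : α → Fin r) : Prop :=
    ({x | g x = 0} : Finset α) ∩ p.1 = {p.2}
  have hexp : exp (-((t₂ + 3) * log N)) = ((N : ℝ) ^ (t₂ + 3))⁻¹ := by
    rw [exp_neg, ← Nat.cast_ofNat, ← Nat.cast_add, ← log_pow, exp_log (by positivity)]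
  have hrare_low : ∀ p ∈ pairs t₁,
      (#({ω | hitCount (isolates p) ω ≤ ξ} : Finset (Fin m → α → Fin r)) : ℝ)
        ≤ T ^ m * ((N : ℝ) ^ (t₂ + 3))⁻¹ := by
    intro p hp
    simp only [pairs, mem_filter, mem_univ, true_and] at hp
    refine (card_hitCount_le_le (isolates p) (card_colorings_isolating_eq_mul hp.2)
      (isolationProb_nonneg _ _) ξ).trans ?_
    rw [← hexp, hp.1]
    gcongr
    linarith
  have hrare_high : ∀ p ∈ pairs t₂,
      (#({ω | ξ ≤ hitCount (isolates p) ω} : Finset (Fin m → α → Fin r)) : ℝ)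
        ≤ T ^ m * ((N : ℝ) ^ (t₂ + 3))⁻¹ := by
    intro p hp
    simp only [pairs, mem_filter, mem_univ, true_and] at hp
    refine (card_le_hitCount_le (isolates p) (card_colorings_isolating_eq_mul hp.2)
      (isolationProb_nonneg _ _) ξ).trans ?_
    rw [← hexp, hp.1]
    gcongr
    linarith
  have hunion : (#(pairs t₁) + #(pairs t₂)) * (T ^ m * ((N : ℝ) ^ (t₂ + 3))⁻¹)
      < Fintype.card (Fin m → α → Fin r) := by
    have hbudget : (#(pairs t₁) + #(pairs t₂) : ℝ) < N ^ (t₂ + 3) := by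
      exact_mod_cast card_pairs_add_card_pairs_lt hα ht
    rw [Fintype.card_fun, Fintype.card_fin, Nat.cast_pow, mul_left_comm, ← div_eq_mul_inv]
    refine mul_lt_of_lt_one_right (by positivity) ?_
    rwa [div_lt_one (by positivity)]
  obtain ⟨ω, hω₁, hω₂⟩ :=
    exists_forall_not_mem_of_card_le _ _ _ _ hrare_low hrare_high hunion
  refine ⟨ω, fun A hA a ha => ?_, fun A hA a ha => ?_⟩
  · simpa [hitCount, isolates] using hω₁ (A, a) (by simp [pairs, hA, ha])
  · simpa [hitCount, isolates] using hω₂ (A, a) (by simp [pairs, hA, ha])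

end Separation

lemma card_filter_inter_eq_singleton_anti {ι α : Type*} [Fintype ι] [DecidableEq α]
    (S : ι → Finset α) {A B : Finset α} {a : α} (hAB : A ⊆ B) (ha : a ∈ A) :
    #{j | S j ∩ B = {a}} ≤ #{j | S j ∩ A = {a}} := by
  refine card_le_card (monotone_filter_right _ fun j _ hj => ?_)
  rw [inter_eq_singleton_iff_forall_mem (hAB ha)] at hj
  rw [inter_eq_singleton_iff_forall_mem ha]
  exact fun x hx => hj x (hAB hx)

theorem exists_distinguisher_of_le {n k m : ℕ} (hn : 2 ≤ n) (hk : 1 ≤ k) (hkn : 2 * k ≤ n)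
    (hm : 2560 * (k : ℝ) ^ 2 * log n ≤ m) :
    ∃ (S : Fin m → Finset (Fin n)) (ξ : ℝ),
      (∀ A : Finset (Fin n), #A ≤ k → ∀ a ∈ A, ξ < #{j | S j ∩ A = {a}}) ∧
      (∀ A : Finset (Fin n), 2 * k ≤ #A → ∀ a ∈ A,
        (#{j | S j ∩ A = {a}} : ℝ) < ξ) := by
  have : NeZero (2 * k) := ⟨by omega⟩
  set q₁ := isolationProb (2 * k) k
  set q₂ := isolationProb (2 * k) (2 * k)
  set L := ((2 * k : ℕ) + 3 : ℝ) * log (Fintype.card (Fin n))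
  set ξ := 9 * (m * q₂ / 8 + L)
  have hlow : L ≤ m * q₁ / 8 - ξ / 7 := by
    have hk' : (1 : ℝ) ≤ k := by exact_mod_cast hk
    have hlog : 0 ≤ log n := log_nonneg (by norm_num; omega)
    have hq₁ : m * (4 * k : ℝ)⁻¹ ≤ m * q₁ :=
      mul_le_mul_of_nonneg_left (inv_four_mul_le_isolationProb hk) (Nat.cast_nonneg m)
    have hq₂ : m * q₂ ≤ 2 / 3 * (m * q₁) := by
      rw [mul_left_comm]
      exact mul_le_mul_of_nonneg_left (isolationProb_two_mul_le hk) (Nat.cast_nonneg m)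
    have hmk : 640 * k * log n ≤ m * (4 * k : ℝ)⁻¹ := by
      rw [← div_eq_mul_inv, le_div_iff₀ (by positivity)]
      linarith
    have hL : L ≤ 5 * k * log n := by
      simp only [L, Fintype.card_fin, Nat.cast_mul, Nat.cast_ofNat]
      nlinarith
    simp only [ξ]
    linarith
  obtain ⟨ω, hsmall, hlarge⟩ :=
    exists_separating_colorings (r := 2 * k) (t₁ := k) (t₂ := 2 * k) (ξ := ξ)
      (by simpa using hn) (by omega) hlow (by simp only [ξ, q₂]; linarith)
  refine ⟨fun j => {x | ω j x = 0}, ξ, fun A hA a ha => ?_, fun A hA a ha => ?_⟩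
  · obtain ⟨B, hAB, hB⟩ := exists_superset_card_eq hA (by simp; omega)
    exact (hsmall B hB a (hAB ha)).trans_le
      (by exact_mod_cast card_filter_inter_eq_singleton_anti _ hAB ha)
  · obtain ⟨B, haB, hBA, hB⟩ :=
      exists_subsuperset_card_eq (singleton_subset_iff.2 ha) (by simp; omega) hA
    exact (hlarge B hB a (haB (mem_singleton_self a))).trans_le'
      (by exact_mod_cast card_filter_inter_eq_singleton_anti _ hBA (haB (mem_singleton_self a)))

/-- For every `n ≥ 2` and `1 ≤ k ≤ n/2`, there exists a `k`-distinguisher over `{0,…,n-1}`: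
a family `S : Fin m → Finset (Fin n)` with `m ≤ C·k²·log n` (for an absolute constant `C`)
and a threshold `ξ` such that `|{j : S j ∩ A = {a}}| > ξ` whenever `a ∈ A` and `|A| ≤ k`,
while `|{j : S j ∩ A = {a}}| < ξ` whenever `a ∈ A` and `|A| ≥ 2k`. -/
theorem distinguisher_exists :
    ∃ C : ℝ, 0 < C ∧
      ∀ n k : ℕ, 2 ≤ n → 1 ≤ k → 2 * k ≤ n →
        ∃ (m : ℕ) (S : Fin m → Finset (Fin n)) (ξ : ℝ),
          (m : ℝ) ≤ C * (k : ℝ) ^ 2 * Real.log n ∧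
          (∀ A : Finset (Fin n), A.card ≤ k → ∀ a ∈ A,
            ξ < ((Finset.univ.filter (fun j : Fin m => S j ∩ A = {a})).card : ℝ)) ∧
          (∀ A : Finset (Fin n), 2 * k ≤ A.card → ∀ a ∈ A,
            ((Finset.univ.filter (fun j : Fin m => S j ∩ A = {a})).card : ℝ) < ξ) := by
  refine ⟨2562, by norm_num, fun n k hn hk hkn => ?_⟩
  have hx : 1 / 2 ≤ (k : ℝ) ^ 2 * log n := by
    have hk' : (1 : ℝ) ≤ (k : ℝ) ^ 2 := by exact_mod_cast Nat.one_le_pow _ _ hk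
    have hlog : log 2 ≤ log n := log_le_log (by norm_num) (by exact_mod_cast hn)
    nlinarith [log_two_gt_d9]
  obtain ⟨S, ξ, hS⟩ :=
    exists_distinguisher_of_le hn hk hkn (Nat.le_ceil (2560 * (k : ℝ) ^ 2 * log n))
  refine ⟨_, S, ξ, ?_, hS⟩
  linarith [Nat.ceil_lt_add_one (by positivity : 0 ≤ 2560 * (k : ℝ) ^ 2 * log n)]
end

section
/- There exist constants c, C > 0 such that for all n and k (powers of 2, k ≤ n) and any s ≥ C·k²·log n, there exists an amortizing selector family {S_{ij}} with parameters n, k, s succeeding at cumulative rate c: for each j ∈ {1,2,4,...,k/2}, each A ⊆ {0,...,n-1} with j/2 ≤ |A| ≤ 2j, and each v ∈ A, there are at least (c/|A|)·s indices i ∈ {1,...,s} such that v ∈ S_{ij} and A ∩ (S_{i(j/2)} ∪ S_{ij} ∪ S_{i(2j)}) = {v}. -/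
/-!
Draw `s` independent uniform colourings `f_i : Fin n → Fin (16k)` and put `w` into `S_{ij}` when
`f_i w` lies in the dyadic band `[k/j, 2k/j)`. The bands of `j/2`, `j` and `2j` all lie below
`4k/j`, so round `i` isolates `v` in `A` as soon as `f_i v` is in the band of `j` and every other
point of `A` is coloured at least `4k/j`. This has probability
`(1/16j) (1 - 1/4j)^(|A|-1) ≥ 1/(64|A|)`, so by a Chernoff bound fewer than `s/(256|A|)` rounds
isolate `v` with probability at most `exp(-s/(256k))`. There are at most `n^(4k)` triples
`(j, A, v)`, and `n^(4k) exp(-s/(256k)) < 1` once `s ≥ 2048 k² log n`.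
-/

open Finset

section LowerTail

variable {ι α : Type*} [Fintype ι] [DecidableEq ι] [Fintype α] (P : α → Prop) [DecidablePred P]

theorem sum_half_pow_card_filter :
    ∑ ω : ι → α, (1 / 2 : ℝ) ^ #{i | P (ω i)} =
      (Fintype.card α - #{x | P x} / 2 : ℝ) ^ Fintype.card ι := by
  have hterm : ∑ x : α, (if P x then (1 / 2 : ℝ) else 1) = Fintype.card α - #{x | P x} / 2 := by
    rw [Finset.sum_ite, sum_const, sum_const, nsmul_eq_mul, nsmul_eq_mul,
      ← Finset.card_univ (α := α), ← card_filter_add_card_filter_not (s := univ) (p := P)]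
    push_cast
    ring
  rw [← hterm, ← Finset.card_univ (α := ι), ← prod_const, prod_univ_sum, Fintype.piFinset_univ]
  refine sum_congr rfl fun ω _ => ?_
  rw [prod_ite, prod_const, prod_const_one, mul_one]

theorem card_filter_card_filter_lt_le {p : ℝ} (hp : p * Fintype.card α ≤ #{x | P x}) :
    (#{ω : ι → α | (#{i | P (ω i)} : ℝ) < p * Fintype.card ι / 4} : ℝ) ≤
      (Fintype.card α : ℝ) ^ Fintype.card ι * Real.exp (-(p * Fintype.card ι / 4)) := by
  set θ := p * Fintype.card ι / 4
  -- Markov's inequality for `(1/2)^X`, where `X` counts the hits of `P`.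
  have hmarkov (c : ℕ) (hc : (c : ℝ) < θ) : 1 ≤ Real.exp θ * (1 / 2 : ℝ) ^ c := by
    have h2 : (2 : ℝ) ^ c ≤ Real.exp c :=
      calc (2 : ℝ) ^ c ≤ Real.exp 1 ^ c :=
            pow_le_pow_left₀ (by norm_num) (by linarith [Real.add_one_le_exp 1]) c
        _ = Real.exp c := by rw [← Real.exp_nat_mul, mul_one]
    calc (1 : ℝ) = 2 ^ c * (1 / 2) ^ c := by rw [← mul_pow]; norm_num
      _ ≤ Real.exp θ * (1 / 2) ^ c := by gcongr; exact h2.trans (Real.exp_le_exp.2 hc.le)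
  have hbase : (Fintype.card α - #{x | P x} / 2 : ℝ) ≤ Fintype.card α * Real.exp (-(p / 2)) := by
    nlinarith [Real.add_one_le_exp (-(p / 2)), (Nat.cast_nonneg (Fintype.card α) : (0 : ℝ) ≤ _)]
  have hpos : (0 : ℝ) ≤ Fintype.card α - #{x | P x} / 2 := by
    have : (#{x | P x} : ℝ) ≤ Fintype.card α := by exact_mod_cast card_filter_le _ _
    linarith [(Nat.cast_nonneg #{x | P x} : (0 : ℝ) ≤ _)]
  calc (#{ω : ι → α | (#{i | P (ω i)} : ℝ) < θ} : ℝ)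
      ≤ ∑ ω ∈ {ω : ι → α | (#{i | P (ω i)} : ℝ) < θ},
          Real.exp θ * (1 / 2 : ℝ) ^ #{i | P (ω i)} := by
        rw [card_eq_sum_ones, Nat.cast_sum, Nat.cast_one]
        exact sum_le_sum fun ω hω => hmarkov _ (mem_filter.1 hω).2
    _ ≤ ∑ ω : ι → α, Real.exp θ * (1 / 2 : ℝ) ^ #{i | P (ω i)} :=
        sum_le_sum_of_subset_of_nonneg (subset_univ _) fun _ _ _ => by positivity
    _ = Real.exp θ * (Fintype.card α - #{x | P x} / 2 : ℝ) ^ Fintype.card ι := by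
        rw [← mul_sum, sum_half_pow_card_filter]
    _ ≤ Real.exp θ * (Fintype.card α * Real.exp (-(p / 2))) ^ Fintype.card ι := by
        gcongr
    _ = (Fintype.card α : ℝ) ^ Fintype.card ι * Real.exp (-θ) := by
        rw [mul_pow, ← Real.exp_nat_mul, mul_left_comm, ← Real.exp_add]
        congr 2
        ring

end LowerTail

theorem exists_forall_notMem_of_sum_card_lt {κ Ω : Type*} [Fintype Ω] [DecidableEq Ω]
    (E : Finset κ) (B : κ → Finset Ω) (h : ∑ e ∈ E, #(B e) < Fintype.card Ω) :
    ∃ ω, ∀ e ∈ E, ω ∉ B e := by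
  by_contra! hcover
  have hsub : (univ : Finset Ω) ⊆ E.biUnion B := fun ω _ => by
    obtain ⟨e, he, hω⟩ := hcover ω
    exact mem_biUnion.2 ⟨e, he, hω⟩
  exact (card_le_card hsub |>.trans card_biUnion_le).not_gt (by rwa [card_univ])

theorem card_filter_card_le_le (α : Type*) [Fintype α] [DecidableEq α] [Nonempty α] (k : ℕ) :
    #{A : Finset α | #A ≤ k} ≤ (k + 1) * Fintype.card α ^ k := by
  have hsub : ({A : Finset α | #A ≤ k} : Finset _) ⊆
      (range (k + 1)).biUnion fun r => powersetCard r univ := fun A hA => by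
    simp only [mem_filter, mem_univ, true_and] at hA
    simpa [mem_biUnion, Nat.lt_succ_iff] using hA
  refine (card_le_card hsub).trans (card_biUnion_le.trans ?_)
  calc ∑ r ∈ range (k + 1), #(powersetCard r (univ : Finset α))
      ≤ ∑ _r ∈ range (k + 1), Fintype.card α ^ k := sum_le_sum fun r hr => ?_
    _ = (k + 1) * Fintype.card α ^ k := by rw [sum_const, card_range, smul_eq_mul]
  rw [card_powersetCard, card_univ]
  exact (Nat.choose_le_pow _ _).trans
    (Nat.pow_le_pow_right Fintype.card_pos (Nat.lt_succ_iff.1 (mem_range.1 hr)))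

theorem card_filter_apply_mem_and_forall_erase {β α : Type*} [Fintype β] [DecidableEq β]
    [Fintype α] [DecidableEq α] (I J : Finset α) {A : Finset β} {v : β} (hv : v ∈ A) :
    #{f : β → α | f v ∈ I ∧ ∀ u ∈ A.erase v, f u ∈ J} =
      #I * #J ^ (#A - 1) * Fintype.card α ^ (Fintype.card β - #A) := by
  set T : β → Finset α := fun x => if x = v then I else if x ∈ A then J else univ
  have hpi : ({f : β → α | f v ∈ I ∧ ∀ u ∈ A.erase v, f u ∈ J} : Finset _) =
      Fintype.piFinset T := by
    ext f
    simp only [mem_filter, mem_univ, true_and, Fintype.mem_piFinset, mem_erase, T]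
    constructor
    · rintro ⟨hfv, hfA⟩ x
      split_ifs with hxv hxA
      exacts [hxv ▸ hfv, hfA x ⟨hxv, hxA⟩, mem_univ _]
    · intro hf
      refine ⟨by simpa using hf v, fun u ⟨huv, huA⟩ => ?_⟩
      simpa [huv, huA] using hf u
  have hA : ∏ x ∈ A, #(T x) = #I * #J ^ (#A - 1) := by
    have hJ : ∀ x ∈ A.erase v, #(T x) = #J := fun x hx => by
      simp [T, ne_of_mem_erase hx, mem_of_mem_erase hx]
    rw [← mul_prod_erase A _ hv, prod_congr rfl hJ, prod_const, card_erase_of_mem hv]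
    simp [T]
  have hAc : ∏ x ∈ Aᶜ, #(T x) = Fintype.card α ^ (Fintype.card β - #A) := by
    have huniv : ∀ x ∈ Aᶜ, #(T x) = Fintype.card α := fun x hx => by
      have hxA : x ∉ A := mem_compl.1 hx
      simp [T, hxA, show x ≠ v from fun h => hxA (h ▸ hv)]
    rw [prod_congr rfl huniv, prod_const, card_compl]
  rw [hpi, Fintype.card_piFinset, ← prod_mul_prod_compl A, hA, hAc]

theorem Fin.card_filter_le_val_and_val_lt (M a b : ℕ) (hb : b ≤ M) :
    #{x : Fin M | a ≤ (x : ℕ) ∧ (x : ℕ) < b} = b - a := by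
  rw [← card_map Fin.valEmbedding, ← Nat.card_Ico]
  congr 1
  ext y
  simp only [mem_map, mem_filter, mem_univ, true_and, Fin.valEmbedding_apply, mem_Ico]
  constructor
  · rintro ⟨x, hx, rfl⟩; exact hx
  · intro hy; exact ⟨⟨y, hy.2.trans_le hb⟩, hy, rfl⟩

theorem card_filter_range_eq_card_filter_fin (s : ℕ) (p : ℕ → Prop) [DecidablePred p] :
    #{i ∈ range s | p i} = #{i : Fin s | p i} := by
  rw [card_filter, card_filter, Fin.sum_univ_eq_sum_range (fun i => if p i then 1 else 0)]

theorem Nat.div_half_eq_two_mul_div {j k : ℕ} (hjk : j ∣ k) (hj : 2 ∣ j) :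
    k / (j / 2) = 2 * (k / j) := by
  obtain ⟨m, rfl⟩ := hj
  obtain ⟨d, rfl⟩ := hjk
  rcases Nat.eq_zero_or_pos m with rfl | hm
  · simp
  · rw [Nat.mul_div_cancel_left m two_pos, Nat.mul_div_cancel_left d (by omega : 0 < 2 * m)]
    exact Nat.div_eq_of_eq_mul_left hm (by ring)

theorem one_div_le_isolation_rate {j : ℝ} {a : ℕ} (hj : 1 ≤ j) (hja : j ≤ 2 * a)
    (haj : (a : ℝ) ≤ 2 * j) :
    1 / (64 * a) ≤ 1 / (16 * j) * (1 - 1 / (4 * j)) ^ (a - 1) := by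
  have ha : (1 : ℝ) ≤ a := by
    rcases Nat.eq_zero_or_pos a with rfl | ha
    · norm_num at hja; linarith
    · exact_mod_cast ha
  have hsub : ((a - 1 : ℕ) : ℝ) ≤ 2 * j := by
    rw [Nat.cast_sub (by exact_mod_cast ha)]; push_cast; linarith
  have hbernoulli : 1 / 2 ≤ (1 - 1 / (4 * j)) ^ (a - 1) :=
    calc (1 / 2 : ℝ) ≤ 1 + ((a - 1 : ℕ) : ℝ) * -(1 / (4 * j)) := by
          have : ((a - 1 : ℕ) : ℝ) * (1 / (4 * j)) ≤ 1 / 2 := by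
            rw [mul_one_div, div_le_iff₀ (by positivity)]; linarith
          linarith
      _ ≤ (1 + -(1 / (4 * j))) ^ (a - 1) := by
          refine one_add_mul_le_pow ?_ _
          rw [neg_le_neg_iff, div_le_iff₀ (by positivity)]; linarith
      _ = (1 - 1 / (4 * j)) ^ (a - 1) := by rw [← sub_eq_add_neg]
  calc 1 / (64 * a : ℝ) ≤ 1 / (16 * j) * (1 / 2) := by
        rw [div_mul_div_comm, one_mul, div_le_div_iff₀ (by positivity) (by positivity)]
        linarith
    _ ≤ 1 / (16 * j) * (1 - 1 / (4 * j)) ^ (a - 1) := by gcongr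

section Selectors

variable {n M : ℕ}

def dyadicSelector (k : ℕ) (f : Fin n → Fin M) (j : ℕ) : Finset (Fin n) :=
  {w | k / j ≤ (f w : ℕ) ∧ (f w : ℕ) < 2 * (k / j)}

def Isolates (d : ℕ) (A : Finset (Fin n)) (v : Fin n) (f : Fin n → Fin M) : Prop :=
  (d ≤ (f v : ℕ) ∧ (f v : ℕ) < 2 * d) ∧ ∀ u ∈ A.erase v, 4 * d ≤ (f u : ℕ)

instance (d : ℕ) (A : Finset (Fin n)) (v : Fin n) : DecidablePred (Isolates (M := M) d A v) :=
  fun _ => by unfold Isolates; infer_instance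

theorem card_filter_isolates {d q : ℕ} (hq : 4 * d ≤ q) {A : Finset (Fin n)} {v : Fin n}
    (hv : v ∈ A) :
    #{f : Fin n → Fin q | Isolates d A v f} = d * (q - 4 * d) ^ (#A - 1) * q ^ (n - #A) := by
  have h := card_filter_apply_mem_and_forall_erase
    {x : Fin q | d ≤ (x : ℕ) ∧ (x : ℕ) < 2 * d} {x | 4 * d ≤ (x : ℕ) ∧ (x : ℕ) < q} hv
  rw [Fin.card_filter_le_val_and_val_lt _ _ _ (by omega),
    Fin.card_filter_le_val_and_val_lt _ _ _ le_rfl, Fintype.card_fin, Fintype.card_fin,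
    show 2 * d - d = d by omega] at h
  rw [← h]
  congr 1
  ext f
  simp [Isolates]

theorem card_filter_isolates_ge {j d k : ℕ} (hk : j * d = k) (hj : 1 ≤ j)
    {A : Finset (Fin n)} {v : Fin n} (hv : v ∈ A) (hjA : j ≤ 2 * #A) (hAj : #A ≤ 2 * j) :
    1 / (64 * #A : ℝ) * Fintype.card (Fin n → Fin (16 * k)) ≤
      #{f : Fin n → Fin (16 * k) | Isolates d A v f} := by
  subst hk
  have h4d : 4 * d ≤ 16 * (j * d) := by nlinarith
  have hAn : #A ≤ n := by simpa using card_le_univ A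
  have hjR : (1 : ℝ) ≤ j := by exact_mod_cast hj
  rw [card_filter_isolates h4d hv, Fintype.card_fun, Fintype.card_fin, Fintype.card_fin]
  push_cast [Nat.cast_sub h4d]
  set q : ℝ := 16 * (j * d)
  have hsplit : q ^ n = q * q ^ (#A - 1) * q ^ (n - #A) := by
    rw [← pow_succ', ← pow_add]; congr 1; omega
  have hq4 : q - 4 * d = q * (1 - 1 / (4 * j)) := by
    simp only [q]; field_simp; ring
  have hqd : 1 / (16 * j) * q = d := by simp only [q]; field_simp
  calc 1 / (64 * #A : ℝ) * q ^ n ≤ 1 / (16 * j) * (1 - 1 / (4 * j)) ^ (#A - 1) * q ^ n := by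
        gcongr
        exact one_div_le_isolation_rate hjR (by exact_mod_cast hjA) (by exact_mod_cast hAj)
    _ = d * (q - 4 * d) ^ (#A - 1) * q ^ (n - #A) := by
        rw [hsplit, hq4, mul_pow q]
        linear_combination ((1 - 1 / (4 * j)) ^ (#A - 1) * q ^ (#A - 1) * q ^ (n - #A)) * hqd

theorem Isolates.selects {k j : ℕ} {A : Finset (Fin n)} {v : Fin n} {f : Fin n → Fin M}
    (hf : Isolates (k / j) A v f) (hv : v ∈ A) (hjk : j ∣ k) (hj : j = 1 ∨ 2 ∣ j) :
    v ∈ dyadicSelector k f j ∧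
      A ∩ ((if j = 1 then ∅ else dyadicSelector k f (j / 2)) ∪ dyadicSelector k f j ∪
        dyadicSelector k f (2 * j)) = {v} := by
  obtain ⟨hfv, hfA⟩ := hf
  have hj0 : 0 < j := Nat.pos_of_ne_zero fun h => by simp [h] at hfv
  have hlow : ∀ w ∈ (if j = 1 then ∅ else dyadicSelector k f (j / 2)) ∪ dyadicSelector k f j ∪
      dyadicSelector k f (2 * j), (f w : ℕ) < 4 * (k / j) := by
    intro w hw
    simp only [mem_union, dyadicSelector, mem_filter, mem_univ, true_and] at hw
    rcases hw with (hw | hw) | hw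
    · split_ifs at hw with hj1
      · simp at hw
      · rw [mem_filter, Nat.div_half_eq_two_mul_div hjk (hj.resolve_left hj1)] at hw
        omega
    · omega
    · have := Nat.div_le_div_left (a := k) (by omega : j ≤ 2 * j) hj0
      omega
  have hvS : v ∈ dyadicSelector k f j := by simpa [dyadicSelector] using hfv
  refine ⟨hvS, eq_singleton_iff_unique_mem.2
    ⟨mem_inter.2 ⟨hv, mem_union_left _ (mem_union_right _ hvS)⟩, fun u hu => ?_⟩⟩
  by_contra huv
  have hhigh := hfA u (mem_erase.2 ⟨huv, (mem_inter.1 hu).1⟩)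
  have hlow_u := hlow u (mem_inter.1 hu).2
  omega

def selectorFamily {s : ℕ} (k : ℕ) (ω : Fin s → Fin n → Fin M) (i j : ℕ) : Finset (Fin n) :=
  if h : i < s then dyadicSelector k (ω ⟨i, h⟩) j else ∅

theorem selectorFamily_coe {s : ℕ} (k : ℕ) (ω : Fin s → Fin n → Fin M) (i : Fin s) (j : ℕ) :
    selectorFamily k ω i j = dyadicSelector k (ω i) j := by
  simp [selectorFamily]

theorem card_isolates_le_card_selected {s k j : ℕ} (ω : Fin s → Fin n → Fin M)
    {A : Finset (Fin n)} {v : Fin n} (hv : v ∈ A) (hjk : j ∣ k) (hj : j = 1 ∨ 2 ∣ j) :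
    #{i | Isolates (k / j) A v (ω i)} ≤
      #{i ∈ range s | v ∈ selectorFamily k ω i j ∧
        A ∩ ((if j = 1 then ∅ else selectorFamily k ω i (j / 2)) ∪ selectorFamily k ω i j ∪
          selectorFamily k ω i (2 * j)) = {v}} := by
  rw [card_filter_range_eq_card_filter_fin]
  refine card_le_card fun i hi => ?_
  rw [mem_filter] at hi ⊢
  simpa only [selectorFamily_coe] using ⟨hi.1, hi.2.selects hv hjk hj⟩

end Selectors

theorem pow_mul_exp_neg_lt_one {n k : ℕ} {s : ℝ} (hn : 2 ≤ n) (hk : 1 ≤ k)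
    (hs : 2048 * (k : ℝ) ^ 2 * Real.log n ≤ s) :
    (n : ℝ) ^ (4 * k) * Real.exp (-(s / (256 * k))) < 1 := by
  have hlog : 0 < Real.log n := Real.log_pos (by exact_mod_cast hn)
  have hkR : (1 : ℝ) ≤ k := by exact_mod_cast hk
  have hexp : 4 * k * Real.log n < s / (256 * k) := by
    rw [lt_div_iff₀ (by positivity)]
    nlinarith [mul_pos (mul_pos (by positivity : (0 : ℝ) < k) (by positivity : (0 : ℝ) < k)) hlog]
  rw [← Real.exp_log (by positivity : (0 : ℝ) < n), ← Real.exp_nat_mul, ← Real.exp_add,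
    Real.exp_lt_one_iff]
  push_cast
  linarith

def candidateTriples (n k : ℕ) : Finset (ℕ × Finset (Fin n) × Fin n) :=
  range (k + 1) ×ˢ ({A | #A ≤ k} : Finset (Finset (Fin n))) ×ˢ (univ : Finset (Fin n))

theorem card_candidateTriples_le {n k : ℕ} (hn : 2 ≤ n) (hk : 1 ≤ k) :
    #(candidateTriples n k) ≤ n ^ (4 * k) := by
  have : NeZero n := ⟨by omega⟩
  have hkn : k + 1 ≤ n ^ k := (Nat.lt_two_pow_self).trans_le (Nat.pow_le_pow_left hn k)
  calc #(candidateTriples n k) ≤ (k + 1) * ((k + 1) * n ^ k * n) := by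
        rw [candidateTriples, card_product, card_product, card_range, card_univ, Fintype.card_fin]
        gcongr
        simpa using card_filter_card_le_le (Fin n) k
    _ ≤ n ^ k * (n ^ k * n ^ k * n) := by gcongr
    _ = n ^ (3 * k + 1) := by ring
    _ ≤ n ^ (4 * k) := Nat.pow_le_pow_right (by omega) (by omega)

theorem card_filter_card_isolates_lt_le {n k s j : ℕ} (hjk : j ∣ k) (hj : 1 ≤ j)
    {A : Finset (Fin n)} {v : Fin n} (hv : v ∈ A) (hjA : j ≤ 2 * #A) (hAj : #A ≤ 2 * j)
    (hAk : #A ≤ k) :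
    (#{ω : Fin s → Fin n → Fin (16 * k) |
        (#{i | Isolates (k / j) A v (ω i)} : ℝ) < s / (256 * #A)} : ℝ) ≤
      (Fintype.card (Fin n → Fin (16 * k)) : ℝ) ^ s * Real.exp (-(s / (256 * k))) := by
  have hA : (0 : ℝ) < #A := by exact_mod_cast card_pos.2 ⟨v, hv⟩
  have htail := card_filter_card_filter_lt_le (ι := Fin s) _
    (card_filter_isolates_ge (Nat.mul_div_cancel' hjk) hj hv hjA hAj)
  rw [Fintype.card_fin, show 1 / (64 * #A : ℝ) * s / 4 = s / (256 * #A) by ring] at htail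
  refine htail.trans (mul_le_mul_of_nonneg_left (Real.exp_le_exp.2 ?_) (by positivity))
  rw [neg_le_neg_iff]
  gcongr

theorem exists_sample_forall_isolates {n k s : ℕ} (hk : 2 ≤ k) (hkn : k ≤ n)
    (hs : 2048 * (k : ℝ) ^ 2 * Real.log n ≤ s) :
    ∃ ω : Fin s → Fin n → Fin (16 * k), ∀ j, j ∣ k → 2 * j ≤ k →
      ∀ A : Finset (Fin n), j ≤ 2 * #A → #A ≤ 2 * j → ∀ v ∈ A,
        (s / (256 * #A) : ℝ) ≤ #{i | Isolates (k / j) A v (ω i)} := by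
  set E := (candidateTriples n k).filter fun e =>
    e.1 ∣ k ∧ 2 * e.1 ≤ k ∧ e.1 ≤ 2 * #e.2.1 ∧ #e.2.1 ≤ 2 * e.1 ∧ e.2.2 ∈ e.2.1
  set N := Fintype.card (Fin n → Fin (16 * k))
  set bad : ℕ × Finset (Fin n) × Fin n → Finset (Fin s → Fin n → Fin (16 * k)) := fun e =>
    {ω | (#{i | Isolates (k / e.1) e.2.1 e.2.2 (ω i)} : ℝ) < s / (256 * #e.2.1)}
  have hbad : ∀ e ∈ E, (#(bad e) : ℝ) ≤ N ^ s * Real.exp (-(s / (256 * k))) := by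
    rintro ⟨j, A, v⟩ he
    simp only [E, mem_filter] at he
    obtain ⟨-, hjk, h2j, hjA, hAj, hv⟩ := he
    have hj : 1 ≤ j := Nat.pos_of_ne_zero fun h => by simp [h] at hjk; omega
    exact card_filter_card_isolates_lt_le hjk hj hv hjA hAj (by omega : #A ≤ k)
  have hN : 0 < N := Fintype.card_pos_iff.2 ⟨fun _ => ⟨0, by omega⟩⟩
  have hE : (#E : ℝ) ≤ n ^ (4 * k) := by
    exact_mod_cast (card_filter_le _ _).trans (card_candidateTriples_le (hk.trans hkn) (by omega))
  have hunion : (∑ e ∈ E, #(bad e) : ℝ) < N ^ s :=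
    calc (∑ e ∈ E, #(bad e) : ℝ) ≤ ∑ _e ∈ E, N ^ s * Real.exp (-(s / (256 * k))) :=
          sum_le_sum hbad
      _ = #E * (N ^ s * Real.exp (-(s / (256 * k)))) := by rw [sum_const, nsmul_eq_mul]
      _ ≤ n ^ (4 * k) * (N ^ s * Real.exp (-(s / (256 * k)))) := by gcongr
      _ = (n ^ (4 * k) * Real.exp (-(s / (256 * k)))) * N ^ s := by ring
      _ < 1 * N ^ s := by
          gcongr
          exact pow_mul_exp_neg_lt_one (hk.trans hkn) (by omega) hs
      _ = N ^ s := one_mul _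
  obtain ⟨ω, hω⟩ := exists_forall_notMem_of_sum_card_lt E bad <| by
    rw [Fintype.card_fun, Fintype.card_fin]
    exact_mod_cast hunion
  refine ⟨ω, fun j hjk h2j A hjA hAj v hv => ?_⟩
  have he : (j, A, v) ∈ E := by
    simp only [E, candidateTriples, mem_filter, mem_product, mem_range, mem_univ, true_and,
      and_true]
    exact ⟨⟨by omega, by omega⟩, hjk, h2j, hjA, hAj, hv⟩
  simpa only [bad, mem_filter, mem_univ, true_and, not_lt] using hω _ he

/-- Existence of amortizing selector families. There are constants `c, C > 0` such that for
every `n` and every power of two `k ≤ n`, and any `s ≥ C·k²·log n`, there is a family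
`S i j ⊆ {0,…,n-1}` (for `1 ≤ i ≤ s` and `j` a power of 2 up to `k`, with `S i (1/2) := ∅`
encoded by the `if j = 1` convention) succeeding at cumulative rate `c`: for each power of
two `j ≤ k/2`, each `A` with `j/2 ≤ |A| ≤ 2j`, and each `v ∈ A`, there are at least
`(c/|A|)·s` indices `i < s` with `v ∈ S i j` and
`A ∩ (S_{i(j/2)} ∪ S_{ij} ∪ S_{i(2j)}) = {v}`. -/
theorem amortizing_selector_exists :
    ∃ c C : ℝ, 0 < c ∧ 0 < C ∧
      ∀ n k : ℕ, (∃ t : ℕ, k = 2 ^ t) → k ≤ n →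
        ∀ s : ℕ, C * (k : ℝ) ^ 2 * Real.log n ≤ s →
          ∃ S : ℕ → ℕ → Finset (Fin n),
            ∀ j : ℕ, (∃ t : ℕ, j = 2 ^ t) → 2 * j ≤ k →
              ∀ A : Finset (Fin n), j ≤ 2 * A.card → A.card ≤ 2 * j → ∀ v ∈ A,
                (c / A.card) * s ≤
                  (((Finset.range s).filter (fun i =>
                      v ∈ S i j ∧
                      A ∩ ((if j = 1 then (∅ : Finset (Fin n)) else S i (j / 2)) ∪ S i j ∪
                          S i (2 * j)) = {v})).card : ℝ) := by
  refine ⟨1 / 256, 2048, by norm_num, by norm_num, ?_⟩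
  rintro n k ⟨t, rfl⟩ hkn s hs
  rcases Nat.lt_or_ge (2 ^ t) 2 with hk | hk
  · refine ⟨fun _ _ => ∅, ?_⟩
    rintro j ⟨b, rfl⟩ h2j
    have := Nat.one_le_two_pow (n := b)
    omega
  obtain ⟨ω, hω⟩ := exists_sample_forall_isolates hk hkn hs
  refine ⟨selectorFamily (2 ^ t) ω, ?_⟩
  rintro j ⟨b, rfl⟩ h2j A hjA hAj v hv
  have hdvd : 2 ^ b ∣ 2 ^ t := Nat.pow_dvd_pow 2 <|
    ((Nat.pow_lt_pow_iff_right (a := 2) (by norm_num)).1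
      (by have := Nat.one_le_two_pow (n := b); omega)).le
  have hpar : 2 ^ b = 1 ∨ 2 ∣ 2 ^ b := by
    rcases b with _ | b
    · exact .inl rfl
    · exact .inr (dvd_pow_self 2 b.succ_ne_zero)
  calc (1 / 256 / #A : ℝ) * s = s / (256 * #A) := by ring
    _ ≤ #{i | Isolates (2 ^ t / 2 ^ b) A v (ω i)} := hω _ hdvd h2j A hjA hAj v hv
    _ ≤ _ := by exact_mod_cast card_isolates_le_card_selected ω hv hdvd hpar
end
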